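/- Lower bound of the Schur complement Cheeger inequality: for any connected weighted graph $G$ and any disjoint nonempty sets $A, B \subseteq V(G)$, letting $I := \mathtt{Schur}(G, A \cup B)$, one has $\lambda_G \le \frac{c^I(A,B)\, \mathrm{vol}_G(A \cup B)}{\mathrm{vol}_G(A)\, \mathrm{vol}_G(B)} \le \frac{2\, c^I(A,B)}{\min(\mathrm{vol}_G(A), \mathrm{vol}_G(B))}$, where $\lambda_G$ is the smallest nonzero eigenvalue of the normalized Laplacian of $G$, $c^I(A,B)$ is the total weight of edges between $A$ and $B$ in $I$, and $\mathrm{vol}_G(S) = \sum_{v \in S} c_v^G$. -/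

import Mathlib

open Matrix MeasureTheory
open scoped Classical

/-- The (weighted) Laplacian matrix of the weighted graph on `V` with weights `c`. -/
noncomputable def lapl {V : Type*} [Fintype V] [DecidableEq V] (c : V → V → ℝ) :
    Matrix V V ℝ :=
  fun u v => if u = v then ∑ w, c u w else -c u v

/-- The graph described by `L` is connected: the kernel of `L` consists of constants. -/
def LapConnected {V : Type*} [Fintype V] (L : Matrix V V ℝ) : Prop :=
  ∀ x : V → ℝ, L *ᵥ x = 0 → ∃ k : ℝ, ∀ v, x v = k

/-- The Schur complement of `L` onto the rows and columns indexed by `S`,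
eliminating the vertices outside of `S`. -/
noncomputable def schur {V : Type*} [Fintype V] [DecidableEq V]
    (L : Matrix V V ℝ) (S : Set V) : Matrix S S ℝ :=
  (Matrix.of fun i j : S => L i.1 j.1)
    - (Matrix.of fun (i : S) (j : {v : V // v ∉ S}) => L i.1 j.1)
        * (Matrix.of fun i j : {v : V // v ∉ S} => L i.1 j.1)⁻¹
        * (Matrix.of fun (i : {v : V // v ∉ S}) (j : S) => L i.1 j.1)

/-- `B` is the Moore–Penrose pseudoinverse of `A`. -/
def IsMPInv {n : Type*} [Fintype n] (A B : Matrix n n ℝ) : Prop :=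
  A * B * A = A ∧ B * A * B = B ∧ (A * B)ᵀ = A * B ∧ (B * A)ᵀ = B * A

/-- The weighted degree of `v`. -/
noncomputable def wdeg {V : Type*} [Fintype V] (c : V → V → ℝ) (v : V) : ℝ := ∑ u, c v u

/-- The smallest Rayleigh quotient of `M` over nonzero vectors orthogonal to `w`;
for a PSD matrix whose kernel is spanned by `w`, this is the smallest nonzero
eigenvalue of `M`. -/
noncomputable def rayleighMin {n : Type*} [Fintype n] (M : Matrix n n ℝ) (w : n → ℝ) : ℝ :=
  sInf {r : ℝ | ∃ x : n → ℝ, x ≠ 0 ∧ x ⬝ᵥ w = 0 ∧ r = (x ⬝ᵥ (M *ᵥ x)) / (x ⬝ᵥ x)}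

/-- The normalized Laplacian `D^{-1/2} L D^{-1/2}`. -/
noncomputable def normLapl {V : Type*} [Fintype V] [DecidableEq V] (c : V → V → ℝ) :
    Matrix V V ℝ :=
  fun u v => lapl c u v / (Real.sqrt (wdeg c u) * Real.sqrt (wdeg c v))

/-- `λ_G`, the smallest nonzero eigenvalue of the normalized Laplacian,
via its Rayleigh quotient characterization over vectors orthogonal to `D^{1/2} 1`. -/
noncomputable def lambdaG {V : Type*} [Fintype V] [DecidableEq V] (c : V → V → ℝ) : ℝ :=
  rayleighMin (normLapl c) (fun v => Real.sqrt (wdeg c v))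

/-! The test vector is built from the harmonic extension `y` to all of `V` of the function
`z` on `A ∪ B` equal to `1 / vol(A)` on `A` and `-1 / vol(B)` on `B`. The Laplacian energy of
`y` is the Schur complement energy of `z`; as the Schur complement is symmetric with zero row
sums, that energy is `c^I(A,B) (1 / vol(A) + 1 / vol(B))²`. After centering `y` at its
degree-weighted mean, `D^{1/2} y` is orthogonal to `D^{1/2} 1`, and its squared norm is at
least the contribution `1 / vol(A) + 1 / vol(B)` of `A ∪ B`; the Rayleigh quotient therefore
bounds `λ_G` by `c^I(A,B) (1 / vol(A) + 1 / vol(B))`. -/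

theorem Matrix.IsSymm.one_dotProduct_mulVec {ι R : Type*} [Fintype ι] [CommRing R]
    {N : Matrix ι ι R} (hN : N.IsSymm) (h1 : N *ᵥ 1 = 0) (x : ι → R) : 1 ⬝ᵥ (N *ᵥ x) = 0 := by
  rw [dotProduct_mulVec, ← hN.eq, vecMul_transpose, h1, zero_dotProduct]

theorem Matrix.IsSymm.dotProduct_mulVec_ite {ι R : Type*} [Fintype ι] [CommRing R]
    {N : Matrix ι ι R} (hN : N.IsSymm) (h1 : N *ᵥ 1 = 0) (p : ι → Prop) [DecidablePred p]
    (α β : R) :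
    (fun i => if p i then α else β) ⬝ᵥ (N *ᵥ fun i => if p i then α else β) =
      (∑ i, ∑ j, if p i ∧ ¬p j then -N i j else 0) * (α - β) ^ 2 := by
  set χ : ι → R := fun i => if p i then 1 else 0
  have hf : (fun i => if p i then α else β) = β • 1 + (α - β) • χ := by
    ext i; by_cases hi : p i <;> simp [χ, hi]
  have hχ : χ ⬝ᵥ (N *ᵥ (χ - 1)) = ∑ i, ∑ j, if p i ∧ ¬p j then -N i j else 0 := by
    simp only [dotProduct, mulVec, Finset.mul_sum]
    refine Finset.sum_congr rfl fun i _ => Finset.sum_congr rfl fun j _ => ?_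
    by_cases hi : p i <;> by_cases hj : p j <;> simp [χ, hi, hj]
  rw [mulVec_sub, h1, dotProduct_sub, dotProduct_zero, sub_zero] at hχ
  rw [hf, mulVec_add, dotProduct_add, add_dotProduct, add_dotProduct]
  simp only [mulVec_smul, dotProduct_smul, smul_dotProduct, hN.one_dotProduct_mulVec h1, h1,
    dotProduct_zero, hχ, smul_eq_mul]
  ring

theorem Matrix.IsSymm.transpose_toBlock {m α : Type*} {L : Matrix m m α} (hL : L.IsSymm)
    (p q : m → Prop) : (L.toBlock p q)ᵀ = L.toBlock q p := by
  ext i j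
  exact congrFun (congrFun hL i.1) j.1

theorem Matrix.submatrix_sumCompl_eq_fromBlocks {m α : Type*} (L : Matrix m m α) (p : m → Prop)
    [DecidablePred p] :
    L.submatrix (Equiv.sumCompl p) (Equiv.sumCompl p) =
      fromBlocks (L.toBlock p p) (L.toBlock p (¬p ·)) (L.toBlock (¬p ·) p)
        (L.toBlock (¬p ·) (¬p ·)) := by
  ext (i | i) (j | j) <;> rfl

section Schur

variable {V : Type*} [Fintype V]

theorem dotProduct_mulVec_sumElim (L : Matrix V V ℝ) (S : Set V) (z : S → ℝ)
    (w : {v // v ∉ S} → ℝ) :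
    (Sum.elim z w ∘ (Equiv.sumCompl (· ∈ S)).symm) ⬝ᵥ
        (L *ᵥ (Sum.elim z w ∘ (Equiv.sumCompl (· ∈ S)).symm)) =
      (z ⊕ᵥ w) ⬝ᵥ (fromBlocks (L.toBlock (· ∈ S) (· ∈ S)) (L.toBlock (· ∈ S) (· ∉ S))
        (L.toBlock (· ∉ S) (· ∈ S)) (L.toBlock (· ∉ S) (· ∉ S)) *ᵥ (z ⊕ᵥ w)) := by
  rw [← submatrix_sumCompl_eq_fromBlocks, submatrix_mulVec_equiv, comp_equiv_symm_dotProduct]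

variable [DecidableEq V]

theorem schur_eq (L : Matrix V V ℝ) (S : Set V) :
    schur L S = L.toBlock (· ∈ S) (· ∈ S) -
      L.toBlock (· ∈ S) (· ∉ S) * (L.toBlock (· ∉ S) (· ∉ S))⁻¹ * L.toBlock (· ∉ S) (· ∈ S) :=
  rfl

theorem isUnit_det_toBlock_compl {L : Matrix V V ℝ} (hL : L.PosSemidef) (hconn : LapConnected L)
    {S : Set V} (hS : S.Nonempty) : IsUnit (L.toBlock (· ∉ S) (· ∉ S)).det := by
  rw [isUnit_iff_ne_zero]
  intro hdet
  obtain ⟨t, ht, hMt⟩ := exists_mulVec_eq_zero_iff.mpr hdet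
  set x := Sum.elim (0 : S → ℝ) t ∘ (Equiv.sumCompl (· ∈ S)).symm
  have hx : L *ᵥ x = 0 := by
    refine (hL.dotProduct_mulVec_zero_iff x).mp ?_
    rw [star_trivial, dotProduct_mulVec_sumElim, fromBlocks_mulVec]
    simp [hMt]
  obtain ⟨k, hk⟩ := hconn x hx
  obtain ⟨s, hs⟩ := hS
  have hk0 : k = 0 := by simpa [x, hs] using (hk s).symm
  exact ht (funext fun j => by simpa [x, hk0] using hk j)

theorem schur_isSymm {L : Matrix V V ℝ} (hL : L.IsSymm) (S : Set V) : (schur L S).IsSymm := by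
  rw [IsSymm, schur_eq, transpose_sub, transpose_mul, transpose_mul, transpose_nonsing_inv,
    hL.transpose_toBlock, hL.transpose_toBlock, hL.transpose_toBlock, hL.transpose_toBlock,
    Matrix.mul_assoc]

theorem schur_mulVec_one {L : Matrix V V ℝ} {S : Set V}
    (hM : IsUnit (L.toBlock (· ∉ S) (· ∉ S)).det) (h1 : L *ᵥ 1 = 0) : schur L S *ᵥ 1 = 0 := by
  have hblocks : fromBlocks (L.toBlock (· ∈ S) (· ∈ S)) (L.toBlock (· ∈ S) (· ∉ S))
      (L.toBlock (· ∉ S) (· ∈ S)) (L.toBlock (· ∉ S) (· ∉ S)) *ᵥ 1 = 0 := by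
    rw [← submatrix_sumCompl_eq_fromBlocks, submatrix_mulVec_equiv, Pi.one_comp, h1]
    rfl
  rw [fromBlocks_mulVec, ← Sum.elim_zero_zero, Sum.elim_eq_iff] at hblocks
  obtain ⟨hS, hT⟩ := hblocks
  simp only [Pi.one_comp] at hS hT
  have hMinv : (L.toBlock (· ∉ S) (· ∉ S))⁻¹ *ᵥ (L.toBlock (· ∉ S) (· ∈ S) *ᵥ 1) = -1 := by
    rw [eq_neg_of_add_eq_zero_left hT, mulVec_neg, mulVec_mulVec, nonsing_inv_mul _ hM,
      one_mulVec]
  rw [schur_eq, sub_mulVec, ← mulVec_mulVec, ← mulVec_mulVec, hMinv, mulVec_neg, sub_neg_eq_add,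
    hS]

noncomputable def harmonicExt (L : Matrix V V ℝ) (S : Set V) (z : S → ℝ) : V → ℝ :=
  Sum.elim z (-(((L.toBlock (· ∉ S) (· ∉ S))⁻¹ * L.toBlock (· ∉ S) (· ∈ S)) *ᵥ z)) ∘
    (Equiv.sumCompl (· ∈ S)).symm

theorem harmonicExt_of_mem (L : Matrix V V ℝ) {S : Set V} (z : S → ℝ) {v : V} (hv : v ∈ S) :
    harmonicExt L S z v = z ⟨v, hv⟩ := by
  simp [harmonicExt, hv]

theorem harmonicExt_energy {L : Matrix V V ℝ} (hL : L.IsSymm) {S : Set V}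
    (hM : IsUnit (L.toBlock (· ∉ S) (· ∉ S)).det) (z : S → ℝ) :
    harmonicExt L S z ⬝ᵥ (L *ᵥ harmonicExt L S z) = z ⬝ᵥ (schur L S *ᵥ z) := by
  have := invertibleOfIsUnitDet _ hM
  have hB : (L.toBlock (· ∈ S) (· ∉ S))ᴴ = L.toBlock (· ∉ S) (· ∈ S) := by
    rw [conjTranspose_eq_transpose_of_trivial, hL.transpose_toBlock]
  have hD : (L.toBlock (· ∉ S) (· ∉ S)).IsHermitian :=
    isHermitian_iff_isSymm.mpr (hL.transpose_toBlock _ _)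
  have hschur := schur_complement_eq₂₂ (L.toBlock (· ∈ S) (· ∈ S)) (L.toBlock (· ∈ S) (· ∉ S))
    z (-(((L.toBlock (· ∉ S) (· ∉ S))⁻¹ * L.toBlock (· ∉ S) (· ∈ S)) *ᵥ z)) hD
  simp only [star_trivial, hB, add_neg_cancel, zero_vecMul, zero_dotProduct, zero_add,
    ← dotProduct_mulVec] at hschur
  rw [harmonicExt, dotProduct_mulVec_sumElim, hschur, schur_eq]

theorem dotProduct_harmonicExt_ite {L : Matrix V V ℝ} (hL : L.IsSymm) {S : Set V}
    (hM : IsUnit (L.toBlock (· ∉ S) (· ∉ S)).det) (h1 : L *ᵥ 1 = 0) (p : S → Prop)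
    [DecidablePred p] (α β : ℝ) :
    harmonicExt L S (fun i => if p i then α else β) ⬝ᵥ
        (L *ᵥ harmonicExt L S fun i => if p i then α else β) =
      (∑ i, ∑ j, if p i ∧ ¬p j then -schur L S i j else 0) * (α - β) ^ 2 := by
  rw [harmonicExt_energy hL hM,
    Matrix.IsSymm.dotProduct_mulVec_ite (schur_isSymm hL S) (schur_mulVec_one hM h1)]

end Schur

theorem LapConnected.diag_pos {V : Type*} [Fintype V] [DecidableEq V] [Nontrivial V]
    {L : Matrix V V ℝ} (hconn : LapConnected L) (hL : L.PosSemidef) (v : V) : 0 < L v v := by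
  refine hL.diag_nonneg.lt_of_ne fun hv => ?_
  have hker : L *ᵥ Pi.single v 1 = 0 := by
    refine (hL.dotProduct_mulVec_zero_iff _).mp ?_
    simp [hv.symm]
  obtain ⟨k, hk⟩ := hconn _ hker
  obtain ⟨u, hu⟩ := exists_ne v
  have := (hk v).trans (hk u).symm
  simp [hu] at this

section Laplacian

variable {V : Type*} [Fintype V] [DecidableEq V] {c : V → V → ℝ}

theorem lapl_mulVec_apply (hdiag : ∀ v, c v v = 0) (x : V → ℝ) (u : V) :
    (lapl c *ᵥ x) u = ∑ v, c u v * (x u - x v) := by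
  have hrow : ∀ v, lapl c u v * x v = (if v = u then (∑ w, c u w) * x v else 0) - c u v * x v := by
    intro v
    by_cases hv : v = u
    · subst hv; simp [lapl, hdiag]
    · simp [lapl, hv, Ne.symm hv]
  simp only [mulVec, dotProduct, hrow, Finset.sum_sub_distrib, Finset.sum_ite_eq',
    Finset.mem_univ, if_true, mul_sub, Finset.sum_mul]

theorem lapl_mulVec_one (hdiag : ∀ v, c v v = 0) : lapl c *ᵥ 1 = 0 := by
  ext u; simp [lapl_mulVec_apply hdiag]

theorem dotProduct_lapl_mulVec (hsymm : ∀ u v, c u v = c v u) (hdiag : ∀ v, c v v = 0)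
    (x : V → ℝ) : x ⬝ᵥ (lapl c *ᵥ x) = (∑ u, ∑ v, c u v * (x u - x v) ^ 2) / 2 := by
  have hform : x ⬝ᵥ (lapl c *ᵥ x) = ∑ u, ∑ v, c u v * (x u - x v) * x u := by
    simp only [dotProduct, lapl_mulVec_apply hdiag, Finset.mul_sum]
    exact Finset.sum_congr rfl fun u _ => Finset.sum_congr rfl fun v _ => by ring
  have hswap : ∑ u, ∑ v, c u v * (x u - x v) * x v = -∑ u, ∑ v, c u v * (x u - x v) * x u := by
    rw [Finset.sum_comm, ← Finset.sum_neg_distrib]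
    refine Finset.sum_congr rfl fun u _ => ?_
    rw [← Finset.sum_neg_distrib]
    exact Finset.sum_congr rfl fun v _ => by rw [hsymm]; ring
  have hsq : ∑ u, ∑ v, c u v * (x u - x v) ^ 2 =
      ∑ u, ∑ v, c u v * (x u - x v) * x u - ∑ u, ∑ v, c u v * (x u - x v) * x v := by
    rw [← Finset.sum_sub_distrib]
    refine Finset.sum_congr rfl fun u _ => ?_
    rw [← Finset.sum_sub_distrib]
    exact Finset.sum_congr rfl fun v _ => by ring
  rw [hsq, hswap, hform]
  ring

theorem dotProduct_lapl_mulVec_sub_const (hsymm : ∀ u v, c u v = c v u) (hdiag : ∀ v, c v v = 0)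
    (x : V → ℝ) (t : ℝ) :
    (fun v => x v - t) ⬝ᵥ (lapl c *ᵥ fun v => x v - t) = x ⬝ᵥ (lapl c *ᵥ x) := by
  simp only [dotProduct_lapl_mulVec hsymm hdiag, sub_sub_sub_cancel_right]

theorem lapl_isSymm (hsymm : ∀ u v, c u v = c v u) : (lapl c).IsSymm := by
  ext u v
  by_cases h : u = v
  · subst h; rfl
  · simp [lapl, h, Ne.symm h, hsymm u v]

theorem lapl_posSemidef (hsymm : ∀ u v, c u v = c v u) (hnonneg : ∀ u v, 0 ≤ c u v)
    (hdiag : ∀ v, c v v = 0) : (lapl c).PosSemidef := by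
  refine .of_dotProduct_mulVec_nonneg ?_ fun x => ?_
  · exact isHermitian_iff_isSymm.mpr (lapl_isSymm hsymm)
  · rw [star_trivial, dotProduct_lapl_mulVec hsymm hdiag]
    exact div_nonneg (Finset.sum_nonneg fun u _ => Finset.sum_nonneg fun v _ =>
      mul_nonneg (hnonneg u v) (sq_nonneg _)) zero_le_two

end Laplacian

theorem rayleighMin_le {n : Type*} [Fintype n] {M : Matrix n n ℝ}
    (hM : ∀ x, 0 ≤ x ⬝ᵥ (M *ᵥ x)) {w x : n → ℝ} (hx : x ≠ 0) (hxw : x ⬝ᵥ w = 0) :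
    rayleighMin M w ≤ x ⬝ᵥ (M *ᵥ x) / (x ⬝ᵥ x) := by
  refine csInf_le ⟨0, ?_⟩ ⟨x, hx, hxw, rfl⟩
  rintro _ ⟨y, -, -, rfl⟩
  exact div_nonneg (hM y) (by simpa using dotProduct_self_star_nonneg y)

section Normalized

variable {V : Type*} [Fintype V] [DecidableEq V] {c : V → V → ℝ}

theorem dotProduct_normLapl_mulVec (x : V → ℝ) :
    x ⬝ᵥ (normLapl c *ᵥ x) =
      (fun v => x v / √(wdeg c v)) ⬝ᵥ (lapl c *ᵥ fun v => x v / √(wdeg c v)) := by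
  simp only [dotProduct, mulVec, normLapl, Finset.mul_sum]
  exact Finset.sum_congr rfl fun u _ => Finset.sum_congr rfl fun v _ => by ring

theorem lambdaG_le (hL : (lapl c).PosSemidef) (hdeg : ∀ v, 0 < wdeg c v) {y : V → ℝ}
    (hy : y ≠ 0) (hmean : ∑ v, wdeg c v * y v = 0) :
    lambdaG c ≤ y ⬝ᵥ (lapl c *ᵥ y) / ∑ v, wdeg c v * y v ^ 2 := by
  have hsqrt : ∀ v, √(wdeg c v) * √(wdeg c v) = wdeg c v := fun v =>
    Real.mul_self_sqrt (hdeg v).le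
  set x : V → ℝ := fun v => √(wdeg c v) * y v
  have hxy : (fun v => x v / √(wdeg c v)) = y :=
    funext fun v => mul_div_cancel_left₀ _ (Real.sqrt_pos.mpr (hdeg v)).ne'
  have hx : x ≠ 0 := fun h => hy (by rw [← hxy, h]; ext; simp)
  have hxw : x ⬝ᵥ (fun v => √(wdeg c v)) = 0 := by
    simpa [x, dotProduct, mul_right_comm _ (y _), hsqrt, mul_comm (y _)] using hmean
  have hxx : x ⬝ᵥ x = ∑ v, wdeg c v * y v ^ 2 :=
    Finset.sum_congr rfl fun v _ => by rw [← hsqrt]; ring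
  have hN : ∀ x, 0 ≤ x ⬝ᵥ (normLapl c *ᵥ x) := fun x => by
    simpa [dotProduct_normLapl_mulVec] using
      hL.dotProduct_mulVec_nonneg fun v => x v / √(wdeg c v)
  simpa [lambdaG, dotProduct_normLapl_mulVec, hxy, hxx] using rayleighMin_le hN hx hxw

theorem lambdaG_le_div (hsymm : ∀ u v, c u v = c v u) (hnonneg : ∀ u v, 0 ≤ c u v)
    (hdiag : ∀ v, c v v = 0) (hdeg : ∀ v, 0 < wdeg c v) (y : V → ℝ) {s : ℝ} (hs : 0 < s)
    (hvar : ∀ m, s ≤ ∑ v, wdeg c v * (y v - m) ^ 2) :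
    lambdaG c ≤ y ⬝ᵥ (lapl c *ᵥ y) / s := by
  obtain ⟨v₀, -, -⟩ := Finset.exists_ne_zero_of_sum_ne_zero (hs.trans_le (hvar 0)).ne'
  have hvol : 0 < ∑ v, wdeg c v := Finset.sum_pos (fun v _ => hdeg v) ⟨v₀, Finset.mem_univ _⟩
  set m := (∑ v, wdeg c v * y v) / ∑ v, wdeg c v
  have hmean : ∑ v, wdeg c v * (y v - m) = 0 := by
    simp only [mul_sub, Finset.sum_sub_distrib, ← Finset.sum_mul, m]
    field_simp
    ring
  have hne : (fun v => y v - m) ≠ 0 := fun h => by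
    have hzero : ∀ v, y v - m = 0 := fun v => congrFun h v
    have := hvar m
    simp only [hzero, ne_eq, OfNat.ofNat_ne_zero, not_false_eq_true, zero_pow, mul_zero,
      Finset.sum_const_zero] at this
    linarith
  have hL := lapl_posSemidef hsymm hnonneg hdiag
  have henergy : 0 ≤ y ⬝ᵥ (lapl c *ᵥ y) := by simpa using hL.dotProduct_mulVec_nonneg y
  calc lambdaG c ≤ (fun v => y v - m) ⬝ᵥ (lapl c *ᵥ fun v => y v - m) /
        ∑ v, wdeg c v * (y v - m) ^ 2 := lambdaG_le hL hdeg hne hmean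
    _ ≤ y ⬝ᵥ (lapl c *ᵥ y) / s := by
        rw [dotProduct_lapl_mulVec_sub_const hsymm hdiag]
        exact div_le_div_of_nonneg_left henergy hs (hvar m)

end Normalized

section Volume

variable {ι : Type*} [Fintype ι]

theorem sum_ite_mem_pos {d : ι → ℝ} (hd : ∀ i, 0 < d i) {A : Set ι} (hA : A.Nonempty) :
    0 < ∑ i, if i ∈ A then d i else 0 := by
  obtain ⟨a, ha⟩ := hA
  refine Finset.sum_pos' (fun i _ => ?_) ⟨a, Finset.mem_univ a, by simpa [ha] using hd a⟩
  split_ifs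
  exacts [(hd i).le, le_rfl]

theorem sum_ite_mem_union (f : ι → ℝ) {A B : Set ι} (hAB : Disjoint A B) :
    (∑ i, if i ∈ A ∪ B then f i else 0) =
      (∑ i, if i ∈ A then f i else 0) + ∑ i, if i ∈ B then f i else 0 := by
  rw [← Finset.sum_add_distrib]
  refine Finset.sum_congr rfl fun i _ => ?_
  by_cases hA : i ∈ A
  · simp [hA, hAB.notMem_of_mem_left hA]
  · by_cases hB : i ∈ B <;> simp [hA, hB]

theorem inv_add_inv_le_sum_mul_sub_sq {d y : ι → ℝ} (hd : ∀ i, 0 ≤ d i) {A B : Set ι}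
    (hAB : Disjoint A B) {a b : ℝ} (ha : a = ∑ i, if i ∈ A then d i else 0)
    (hb : b = ∑ i, if i ∈ B then d i else 0) (ha0 : 0 < a) (hb0 : 0 < b)
    (hyA : ∀ i ∈ A, y i = a⁻¹) (hyB : ∀ i ∈ B, y i = -b⁻¹) (m : ℝ) :
    a⁻¹ + b⁻¹ ≤ ∑ i, d i * (y i - m) ^ 2 := by
  have hsplit : a * (a⁻¹ - m) ^ 2 + b * (-b⁻¹ - m) ^ 2 ≤ ∑ i, d i * (y i - m) ^ 2 := calc
    _ = ∑ i, ((if i ∈ A then d i else 0) * (a⁻¹ - m) ^ 2 +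
          (if i ∈ B then d i else 0) * (-b⁻¹ - m) ^ 2) := by
      rw [Finset.sum_add_distrib, ← Finset.sum_mul, ← Finset.sum_mul, ← ha, ← hb]
    _ ≤ _ := by
      refine Finset.sum_le_sum fun i _ => ?_
      by_cases hA : i ∈ A
      · simp [hA, hAB.notMem_of_mem_left hA, hyA i hA]
      · by_cases hB : i ∈ B
        · simp [hA, hB, hyB i hB]
        · simpa [hA, hB] using mul_nonneg (hd i) (sq_nonneg (y i - m))
  have hexpand : a * (a⁻¹ - m) ^ 2 + b * (-b⁻¹ - m) ^ 2 = a⁻¹ + b⁻¹ + (a + b) * m ^ 2 := by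
    field_simp
    ring
  nlinarith [sq_nonneg m]

end Volume

theorem mul_add_div_mul_le_two_mul_div_min {a b c : ℝ} (hc : 0 ≤ c) (ha : 0 < a) (hb : 0 < b) :
    c * (a + b) / (a * b) ≤ 2 * c / min a b := by
  rcases le_total a b with h | h
  · rw [min_eq_left h, div_le_div_iff₀ (by positivity) ha]
    nlinarith [mul_nonneg hc (sub_nonneg.mpr h), mul_pos ha hb]
  · rw [min_eq_right h, div_le_div_iff₀ (by positivity) hb]
    nlinarith [mul_nonneg hc (sub_nonneg.mpr h), mul_pos ha hb]

/-- Lower bound of the Schur complement Cheeger inequality: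
`λ_G ≤ c^I(A,B) vol_G(A∪B) / (vol_G(A) vol_G(B)) ≤ 2 c^I(A,B) / min(vol_G(A), vol_G(B))`. -/
theorem schur_cheeger_lower_bound {V : Type*} [Fintype V] [DecidableEq V]
    (c : V → V → ℝ) (hsymm : ∀ u v, c u v = c v u) (hnonneg : ∀ u v, 0 ≤ c u v)
    (hdiag : ∀ v, c v v = 0) (hconn : LapConnected (lapl c))
    (A B : Set V) (hd : Disjoint A B) (hA : A.Nonempty) (hB : B.Nonempty)
    (cI volA volB volAB : ℝ)
    (hcI : cI = ∑ i : ↥(A ∪ B), ∑ j : ↥(A ∪ B),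
        if i.1 ∈ A ∧ j.1 ∈ B then -(schur (lapl c) (A ∪ B) i j) else 0)
    (hvolA : volA = ∑ v : V, if v ∈ A then wdeg c v else 0)
    (hvolB : volB = ∑ v : V, if v ∈ B then wdeg c v else 0)
    (hvolAB : volAB = ∑ v : V, if v ∈ A ∪ B then wdeg c v else 0) :
    lambdaG c ≤ cI * volAB / (volA * volB) ∧
    cI * volAB / (volA * volB) ≤ 2 * cI / min volA volB := by
  obtain ⟨a, ha⟩ := hA
  obtain ⟨b, hb⟩ := hB
  have : Nontrivial V := ⟨a, b, fun h => hd.notMem_of_mem_left ha (h ▸ hb)⟩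
  have hL := lapl_posSemidef hsymm hnonneg hdiag
  have hdeg : ∀ v, 0 < wdeg c v := fun v => by simpa [lapl, wdeg] using hconn.diag_pos hL v
  have hvolA0 : 0 < volA := hvolA ▸ sum_ite_mem_pos hdeg ⟨a, ha⟩
  have hvolB0 : 0 < volB := hvolB ▸ sum_ite_mem_pos hdeg ⟨b, hb⟩
  rw [hvolAB, sum_ite_mem_union _ hd, ← hvolA, ← hvolB]
  set y := harmonicExt (lapl c) (A ∪ B) (fun i => if i.1 ∈ A then volA⁻¹ else -volB⁻¹) with hy
  have hE : y ⬝ᵥ (lapl c *ᵥ y) = cI * (volA⁻¹ + volB⁻¹) ^ 2 := by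
    have hmemB : ∀ j : ↥(A ∪ B), j.1 ∈ B ↔ j.1 ∉ A := fun j =>
      ⟨fun h => hd.notMem_of_mem_right h, j.2.resolve_left⟩
    rw [dotProduct_harmonicExt_ite (lapl_isSymm hsymm) (isUnit_det_toBlock_compl hL hconn
      ⟨a, Or.inl ha⟩) (lapl_mulVec_one hdiag), hcI, sub_neg_eq_add]
    simp only [hmemB]
    congr!
  have hcI0 : 0 ≤ cI := by
    have := hL.dotProduct_mulVec_nonneg y
    rw [star_trivial, hE] at this
    exact nonneg_of_mul_nonneg_left this (by positivity)
  have hvar := inv_add_inv_le_sum_mul_sub_sq (y := y) (fun v => (hdeg v).le) hd hvolA hvolB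
    hvolA0 hvolB0
    (fun v hv => by rw [hy, harmonicExt_of_mem _ _ (Set.mem_union_left B hv)]; simp [hv])
    (fun v hv => by
      rw [hy, harmonicExt_of_mem _ _ (Set.mem_union_right A hv)]
      simp [hd.notMem_of_mem_right hv])
  refine ⟨?_, mul_add_div_mul_le_two_mul_div_min hcI0 hvolA0 hvolB0⟩
  calc lambdaG c ≤ y ⬝ᵥ (lapl c *ᵥ y) / (volA⁻¹ + volB⁻¹) :=
        lambdaG_le_div hsymm hnonneg hdiag hdeg y (by positivity) hvar
    _ = cI * (volA + volB) / (volA * volB) := by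
        rw [hE]; field_simp; ring
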